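/- arXiv:2112.02987 — 10 statements merged into one kernel-verified Lean document; each statement's English description precedes it below -/
import Mathlib

section
/- Let n = sm with m odd, and let F be a polynomial with coefficients in F_{2^s} which, as a function on F_{2^n}, is differentially 4-uniform (i.e., for all nonzero a and all b in F_{2^n}, the equation F(x+a)+F(x)=b has at most 4 solutions). Then for every a in F_{2^s} with a ≠ 0 and every b in F_{2^s}, the equation F(x+a)+F(x)=b has no solution x in F_{2^n} \ F_{2^s}. -/
/-!
The solution set `S` of `F (x + a) + F x = b` is stable under `φ : x ↦ x ^ 2 ^ s` and under
translation by `a`. Since `φ^[m] = id` with `m` odd, a solution `x ∉ 𝔽_{2^s}` has a `φ`-orbit of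
odd length `d ≥ 3`, and this orbit is disjoint from its translate by `a`: a relation
`φ^[k] x = x + a` gives `φ^[2k] x = x`, hence `φ^[k] x = x` because `d` is odd. So `|S| ≥ 2d ≥ 6`.
-/

open Function Set

lemma Function.IsPeriodicPt.odd_minimalPeriod {α : Type*} {f : α → α} {m : ℕ} {x : α}
    (hx : IsPeriodicPt f m x) (hm : Odd m) : Odd (minimalPeriod f x) :=
  hm.of_dvd_nat hx.minimalPeriod_dvd

lemma Function.three_le_minimalPeriod_of_odd {α : Type*} {f : α → α} {x : α}
    (hd : Odd (minimalPeriod f x)) (hfx : f x ≠ x) : 3 ≤ minimalPeriod f x := by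
  have h1 : minimalPeriod f x ≠ 1 := fun h => hfx (minimalPeriod_eq_one_iff_isFixedPt.mp h)
  obtain ⟨t, ht⟩ := hd
  omega

section TranslatedOrbit

variable {G : Type*} [AddCommGroup G] {φ : G →+ G} {x a : G}

lemma iterate_ne_self_add (hd : Odd (minimalPeriod φ x)) (ha : φ a = a) (h2a : a + a = 0)
    (ha0 : a ≠ 0) (k : ℕ) : φ^[k] x ≠ x + a := by
  intro h
  have h2k : IsPeriodicPt φ (2 * k) x := by
    show φ^[2 * k] x = x
    rw [two_mul, iterate_add_apply, h, iterate_map_add, iterate_fixed ha, h, add_assoc, h2a,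
      add_zero]
  have hk : IsPeriodicPt φ k x := (isPeriodicPt_minimalPeriod φ x).trans_dvd
    (hd.coprime_two_right.dvd_of_dvd_mul_left h2k.minimalPeriod_dvd)
  exact ha0 (by simpa [hk.eq] using h)

lemma iterate_ne_iterate_add (hd : Odd (minimalPeriod φ x)) (ha : φ a = a) (h2a : a + a = 0)
    (ha0 : a ≠ 0) (i j : ℕ) : φ^[i] x ≠ φ^[j] x + a := by
  intro h
  -- apply `φ^[(d - 1) * j]` to both sides, using `φ^[d * j] x = x`
  apply iterate_ne_self_add hd ha h2a ha0 ((minimalPeriod φ x - 1) * j + i)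
  have hdj : (minimalPeriod φ x - 1) * j + j = minimalPeriod φ x * j := by
    obtain ⟨t, ht⟩ := hd
    rw [ht]
    simp [add_mul]
  rw [iterate_add_apply, h, iterate_map_add, iterate_fixed ha, ← iterate_add_apply, hdj,
    ((isPeriodicPt_minimalPeriod φ x).mul_const j).eq]

lemma two_mul_minimalPeriod_le_ncard {S : Set G} (hS : S.Finite) (hφS : MapsTo φ S S)
    (haS : MapsTo (· + a) S S) (hxS : x ∈ S) (hd : Odd (minimalPeriod φ x)) (ha : φ a = a)
    (h2a : a + a = 0) (ha0 : a ≠ 0) : 2 * minimalPeriod φ x ≤ S.ncard := by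
  set O : Set G := (φ^[·] x) '' Iio (minimalPeriod φ x)
  have hO : O.ncard = minimalPeriod φ x := by
    rw [iterate_injOn_Iio_minimalPeriod.ncard_image, ncard_Iio_nat]
  have hOa : ((· + a) '' O).ncard = minimalPeriod φ x := by
    rw [ncard_image_of_injective _ (add_left_injective a), hO]
  have hdisj : Disjoint O ((· + a) '' O) := by
    rw [Set.disjoint_left]
    rintro _ ⟨i, -, rfl⟩ ⟨_, ⟨j, -, rfl⟩, h⟩
    exact iterate_ne_iterate_add hd ha h2a ha0 i j h.symm
  have hOS : O ⊆ S := image_subset_iff.2 fun i _ => hφS.iterate i hxS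
  calc 2 * minimalPeriod φ x = (O ∪ (· + a) '' O).ncard := by
        rw [ncard_union_eq hdisj ((finite_Iio _).image _) (((finite_Iio _).image _).image _),
          hO, hOa, two_mul]
    _ ≤ S.ncard := ncard_le_ncard (union_subset hOS (haS.mono hOS subset_rfl).image_subset) hS

end TranslatedOrbit

section DerivativeSolutions

variable {R : Type*} [CommRing R] [CharP R 2]

lemma mapsTo_add_derivative_solutions (F : R → R) (a b : R) :
    MapsTo (· + a) {x | F (x + a) + F x = b} {x | F (x + a) + F x = b} := by
  intro x hx
  rwa [mem_ofPred_eq, add_assoc, CharTwo.add_self_eq_zero, add_zero, add_comm]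

lemma mapsTo_pow_derivative_solutions {F : R → R} {s : ℕ}
    (hF : ∀ x, F (x ^ 2 ^ s) = F x ^ 2 ^ s) {a b : R} (ha : a ^ 2 ^ s = a) (hb : b ^ 2 ^ s = b) :
    MapsTo (· ^ 2 ^ s) {x | F (x + a) + F x = b} {x | F (x + a) + F x = b} := by
  intro x hx
  simp only [mem_ofPred_eq] at hx ⊢
  rw [← ha, ← add_pow_char_pow, hF, hF, ← add_pow_char_pow, hx, hb]

end DerivativeSolutions

lemma GaloisField.pow_card_eq_self {p n : ℕ} [Fact p.Prime] (hn : n ≠ 0) (x : GaloisField p n) :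
    x ^ p ^ n = x := by
  have := Fintype.ofFinite (GaloisField p n)
  rw [← GaloisField.card p n hn, Nat.card_eq_fintype_card, FiniteField.pow_card]

/-- If `F` has coefficients in `𝔽_{2^s}` (equivalently, commutes with the
Frobenius `x ↦ x^{2^s}`) and is differentially 4-uniform over `𝔽_{2^n}`, `n = s·m`, `m` odd,
then for `a ∈ 𝔽_{2^s}*`, `b ∈ 𝔽_{2^s}`, every solution of `F(x+a)+F(x)=b` lies in `𝔽_{2^s}`.
Membership in `𝔽_{2^s}` is expressed by `x ^ 2 ^ s = x`. -/
theorem stmt_0 (s m n : ℕ) (hs : 0 < s) (hm : Odd m) (hn : n = s * m)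
    (F : GaloisField 2 n → GaloisField 2 n)
    (hcoef : ∀ x : GaloisField 2 n, F (x ^ 2 ^ s) = F x ^ 2 ^ s)
    (hdu : ∀ a b : GaloisField 2 n, a ≠ 0 →
      Nat.card {x : GaloisField 2 n // F (x + a) + F x = b} ≤ 4)
    (a b : GaloisField 2 n) (ha : a ^ 2 ^ s = a) (ha0 : a ≠ 0) (hb : b ^ 2 ^ s = b) :
    ∀ x : GaloisField 2 n, F (x + a) + F x = b → x ^ 2 ^ s = x := by
  intro x hx
  by_contra hxs
  let φ : GaloisField 2 n →+ GaloisField 2 n := iterateFrobenius (GaloisField 2 n) 2 s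
  have hper : IsPeriodicPt φ m x := by
    show (iterateFrobenius _ 2 s)^[m] x = x
    rw [coe_iterateFrobenius, ← iterate_mul, ← coe_iterateFrobenius, iterateFrobenius_def, ← hn,
      GaloisField.pow_card_eq_self (hn ▸ (Nat.mul_pos hs hm.pos).ne')]
  have hd := hper.odd_minimalPeriod hm
  have h3 := three_le_minimalPeriod_of_odd hd hxs
  have h6 := two_mul_minimalPeriod_le_ncard (toFinite _) (mapsTo_pow_derivative_solutions hcoef ha hb)
    (mapsTo_add_derivative_solutions F a b) hx hd ha (CharTwo.add_self_eq_zero a) ha0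
  have h4 : {y | F (y + a) + F y = b}.ncard ≤ 4 := hdu a b ha0
  omega
end

section
/- Let n = sm, k ≥ 2, and let F be a polynomial with coefficients in F_{2^s} which, as a function on F_{2^n}, is differentially 2k-uniform. If m is not divisible by any integer t with 2 ≤ t ≤ k, then for every nonzero a in F_{2^s} and every b in F_{2^s}, the equation F(x+a)+F(x)=b has no solution x in F_{2^n} \ F_{2^s}. -/
/-! The Frobenius power `φ = (·) ^ 2 ^ s` and the translation `y ↦ y + a` commute and both
preserve the solution set `S` of `F (y + a) + F y = b`. A solution `x ∉ 𝔽_{2^s}` has a `φ`-orbit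
of length `t ∣ m` with `t ≠ 1`, so `t > k` and `t` is odd. Because `t` is odd and the translation
has no fixed points, it carries the orbit to a disjoint one inside `S`, giving `|S| ≥ 2t > 2k`. -/

open Function Set

section OddOrbit

variable {α : Type*} {f τ : α → α} {x : α}

/- Otherwise `τ x = f^[e] x`, hence `x = f^[2e] x`, and oddness of the period forces
`f^[e] x = x`. -/
theorem Function.Involutive.apply_iterate_ne_iterate (hτ : Involutive τ)
    (hcomm : Function.Commute f τ) (hx : τ x ≠ x) (hodd : Odd (minimalPeriod f x)) {i : ℕ}
    (hi : i ≤ minimalPeriod f x) (j : ℕ) : τ (f^[i] x) ≠ f^[j] x := by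
  intro h
  set t := minimalPeriod f x
  set e := t - i + j
  have hτx : τ x = f^[e] x :=
    calc τ x = τ (f^[t - i] (f^[i] x)) := by
          rw [← iterate_add_apply, Nat.sub_add_cancel hi, iterate_minimalPeriod]
      _ = f^[t - i] (τ (f^[i] x)) := ((hcomm.iterate_left _).eq _).symm
      _ = f^[e] x := by rw [h, iterate_add_apply]
  have hper : IsPeriodicPt f (2 * e) x :=
    calc f^[2 * e] x = f^[e] (τ x) := by rw [two_mul, iterate_add_apply, hτx]
      _ = x := by rw [(hcomm.iterate_left _).eq, ← hτx, hτ]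
  have hte : t ∣ e := hodd.coprime_two_right.dvd_of_dvd_mul_left hper.minimalPeriod_dvd
  exact hx (hτx.trans (isPeriodicPt_iff_minimalPeriod_dvd.mpr hte))

theorem two_mul_minimalPeriod_le_ncard_s1 (hτ : Involutive τ) (hcomm : Function.Commute f τ)
    (hx : τ x ≠ x) (hodd : Odd (minimalPeriod f x)) {S : Set α} (hS : S.Finite)
    (hfS : MapsTo f S S) (hτS : MapsTo τ S S) (hxS : x ∈ S) :
    2 * minimalPeriod f x ≤ S.ncard := by
  classical
  set t := minimalPeriod f x
  set orbit := (Finset.range t).image (f^[·] x)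
  have horbit : orbit.card = t := by
    rw [Finset.card_image_of_injOn, Finset.card_range]
    simpa [Set.InjOn] using iterate_injOn_Iio_minimalPeriod (f := f) (x := x)
  have hdisj : Disjoint orbit (orbit.image τ) := by
    simp only [orbit, Finset.disjoint_left, Finset.mem_image, Finset.mem_range]
    rintro _ ⟨j, -, rfl⟩ ⟨_, ⟨i, hi, rfl⟩, h⟩
    exact hτ.apply_iterate_ne_iterate hcomm hx hodd hi.le j h
  have hsub : (↑(orbit ∪ orbit.image τ) : Set α) ⊆ S := by
    simp only [orbit, Finset.coe_union, Finset.coe_image, union_subset_iff, image_subset_iff]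
    exact ⟨fun i _ => hfS.iterate i hxS, fun i _ => hτS (hfS.iterate i hxS)⟩
  calc 2 * t = (orbit ∪ orbit.image τ).card := by
        rw [Finset.card_union_of_disjoint hdisj, Finset.card_image_of_injective _ hτ.injective,
          horbit, two_mul]
    _ = (↑(orbit ∪ orbit.image τ) : Set α).ncard := (ncard_coe_finset _).symm
    _ ≤ S.ncard := ncard_le_ncard hsub hS

end OddOrbit

theorem mapsTo_pow_expChar_pow_setOf {R : Type*} [CommRing R] {p : ℕ} [ExpChar R p] {s : ℕ}
    {F : R → R} (hF : ∀ x, F (x ^ p ^ s) = F x ^ p ^ s) {a b : R} (ha : a ^ p ^ s = a)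
    (hb : b ^ p ^ s = b) :
    MapsTo (· ^ p ^ s) {x | F (x + a) + F x = b} {x | F (x + a) + F x = b} := by
  intro x (hx : F (x + a) + F x = b)
  show F (x ^ p ^ s + a) + F (x ^ p ^ s) = b
  rw [← ha, ← add_pow_expChar_pow, hF, hF, ← add_pow_expChar_pow, hx, hb]

theorem mapsTo_add_right_setOf {R : Type*} [Ring R] [CharP R 2] (F : R → R) (a b : R) :
    MapsTo (· + a) {x | F (x + a) + F x = b} {x | F (x + a) + F x = b} := by
  intro x (hx : F (x + a) + F x = b)
  show F (x + a + a) + F (x + a) = b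
  rwa [CharTwo.add_cancel_right, add_comm]

theorem GaloisField.pow_pow_self (p n : ℕ) [Fact p.Prime] (x : GaloisField p n) :
    x ^ p ^ n = x := by
  rcases Nat.eq_zero_or_pos n with rfl | hn
  · rw [pow_zero, pow_one]
  · have := Fintype.ofFinite (GaloisField p n)
    rw [← GaloisField.card p n hn.ne', Nat.card_eq_fintype_card, FiniteField.pow_card]

theorem stmt_1_general (s m n k : ℕ) (hn : n = s * m) (hk : 2 ≤ k)
    (hmdiv : ∀ t : ℕ, 2 ≤ t → t ≤ k → ¬ t ∣ m)
    (F : GaloisField 2 n → GaloisField 2 n)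
    (hcoef : ∀ x : GaloisField 2 n, F (x ^ 2 ^ s) = F x ^ 2 ^ s)
    (hdu : ∀ a b : GaloisField 2 n, a ≠ 0 →
      Nat.card {x : GaloisField 2 n // F (x + a) + F x = b} ≤ 2 * k)
    (a b : GaloisField 2 n) (ha : a ^ 2 ^ s = a) (ha0 : a ≠ 0) (hb : b ^ 2 ^ s = b) :
    ∀ x : GaloisField 2 n, F (x + a) + F x = b → x ^ 2 ^ s = x := by
  intro x hx
  by_contra hxs
  set φ : GaloisField 2 n → GaloisField 2 n := (· ^ 2 ^ s)
  set t := minimalPeriod φ x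
  have hcomm : Function.Commute φ (· + a) := fun y => by
    simp only [φ]; rw [add_pow_char_pow, ha]
  have htm : t ∣ m := by
    refine IsPeriodicPt.minimalPeriod_dvd ?_
    simp only [IsPeriodicPt, IsFixedPt, φ, pow_iterate, ← pow_mul, ← hn,
      GaloisField.pow_pow_self]
  have ht1 : t ≠ 1 := fun h => hxs (minimalPeriod_eq_one_iff_isFixedPt.mp h)
  have hodd : Odd t := Nat.not_even_iff_odd.mp fun h => hmdiv 2 le_rfl hk (h.two_dvd.trans htm)
  have hkt : k < t := by
    have := Nat.odd_iff.mp hodd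
    by_contra hle
    exact hmdiv t (by omega) (by omega) htm
  have hsol := two_mul_minimalPeriod_le_ncard_s1 (fun y => CharTwo.add_cancel_right y a) hcomm
    (by simpa using ha0) hodd (toFinite _) (mapsTo_pow_expChar_pow_setOf hcoef ha hb)
    (mapsTo_add_right_setOf F a b) hx
  have hcard : 2 * t ≤ 2 * k := (Nat.card_coe_set_eq _ ▸ hsol).trans (hdu a b ha0)
  omega

/-- `F` with coefficients in `𝔽_{2^s}` (it commutes with `x ↦ x^{2^s}`),
differentially `2k`-uniform over `𝔽_{2^n}` (`n = s·m`, `k ≥ 2`), with `m` not divisible by any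
integer `2 ≤ t ≤ k`: then for `a ∈ 𝔽_{2^s}*`, `b ∈ 𝔽_{2^s}`, all solutions of
`F(x+a)+F(x)=b` lie in `𝔽_{2^s}` (i.e. satisfy `x ^ 2 ^ s = x`). -/
theorem stmt_1 (s m n k : ℕ) (hs : 0 < s) (hm : 0 < m) (hn : n = s * m) (hk : 2 ≤ k)
    (hmdiv : ∀ t : ℕ, 2 ≤ t → t ≤ k → ¬ t ∣ m)
    (F : GaloisField 2 n → GaloisField 2 n)
    (hcoef : ∀ x : GaloisField 2 n, F (x ^ 2 ^ s) = F x ^ 2 ^ s)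
    (hdu : ∀ a b : GaloisField 2 n, a ≠ 0 →
      Nat.card {x : GaloisField 2 n // F (x + a) + F x = b} ≤ 2 * k)
    (a b : GaloisField 2 n) (ha : a ^ 2 ^ s = a) (ha0 : a ≠ 0) (hb : b ^ 2 ^ s = b) :
    ∀ x : GaloisField 2 n, F (x + a) + F x = b → x ^ 2 ^ s = x :=
  stmt_1_general s m n k hn hk hmdiv F hcoef hdu a b ha ha0 hb
end

section
/- Let n = sm with m odd, let c ∈ F_{p^s}, and let F be a polynomial with coefficients in F_{p^s}. If F is almost perfect c-nonlinear on F_{p^n} (i.e., for all a, b the equation F(x+a) − cF(x) = b has at most 2 solutions), then for all a, b ∈ F_{p^s}, the equation F(x+a) − cF(x) = b has no solution x in F_{p^n} \ F_{p^s}. -/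
/-!
The Frobenius `φ : x ↦ x ^ p ^ s` fixes `a`, `b`, `c` and commutes with `F`, so it permutes the
solutions of `F (x + a) - c * F x = b`. A solution `x ∉ 𝔽_{p^s}` would therefore give solutions
`x`, `φ x`, `φ² x`; these are distinct, because `φ x ≠ x`, `φ` is injective, and `φ² x = x`
together with `φ^m x = x` (`m` odd) forces `φ x = x`. Three solutions contradict APcN.
-/

open Function Set

theorem mapsTo_setOf_add_sub_mul_eq {R : Type*} [CommRing R] (φ : R →+* R) {F : R → R}
    (hF : ∀ x, F (φ x) = φ (F x)) {a b c : R} (ha : φ a = a) (hb : φ b = b) (hc : φ c = c) :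
    MapsTo φ {x | F (x + a) - c * F x = b} {x | F (x + a) - c * F x = b} := by
  intro x (hx : F (x + a) - c * F x = b)
  show F (φ x + a) - c * F (φ x) = b
  rw [← ha, ← map_add, hF, hF, ← hc, ← map_mul, ← map_sub, hx, hb]

theorem isFixedPt_of_mapsTo_of_ncard_le_two {α : Type*} {φ : α → α} (hφ : Injective φ)
    {S : Set α} (hS : MapsTo φ S S) (hfin : S.Finite) (hcard : S.ncard ≤ 2) {x : α} (hx : x ∈ S)
    {m : ℕ} (hm : Odd m) (hper : IsPeriodicPt φ m x) : IsFixedPt φ x := by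
  by_contra hne
  have hnot2 : ¬IsPeriodicPt φ 2 x := fun h2 ↦
    hne ((Nat.coprime_two_left.mpr hm).gcd_eq_one ▸ h2.gcd hper : IsPeriodicPt φ 1 x)
  have horbit : ({x, φ x, φ (φ x)} : Set α).ncard = 3 :=
    ncard_eq_three.mpr ⟨x, φ x, φ (φ x), Ne.symm hne, Ne.symm hnot2,
      fun h ↦ hne (hφ h).symm, rfl⟩
  have hsub : ({x, φ x, φ (φ x)} : Set α) ⊆ S := by
    rintro y (rfl | rfl | rfl)
    exacts [hx, hS hx, hS (hS hx)]
  have := horbit ▸ ncard_le_ncard hsub hfin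
  omega

theorem isPeriodicPt_iterateFrobenius {K : Type*} [Field K] [Finite K] {p : ℕ} [ExpChar K p]
    {s m : ℕ} (hcard : Nat.card K = p ^ (s * m)) (x : K) :
    IsPeriodicPt (iterateFrobenius K p s) m x := by
  have := Fintype.ofFinite K
  rw [Nat.card_eq_fintype_card, pow_mul] at hcard
  show (· ^ p ^ s)^[m] x = x
  rw [pow_iterate, ← hcard]
  exact FiniteField.pow_card x

/-- `F` with coefficients in `𝔽_{p^s}`, `c ∈ 𝔽_{p^s}`, `F` almost perfect
c-nonlinear on `𝔽_{p^n}` (`n = s·m`, `m` odd): for `a, b ∈ 𝔽_{p^s}` the equation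
`F(x+a) - c·F(x) = b` has no solution outside `𝔽_{p^s}`. -/
theorem stmt_3 (p s m n : ℕ) [Fact p.Prime] (hs : 0 < s) (hm : Odd m) (hn : n = s * m)
    (c : GaloisField p n) (hc : c ^ p ^ s = c)
    (F : GaloisField p n → GaloisField p n)
    (hcoef : ∀ x : GaloisField p n, F (x ^ p ^ s) = F x ^ p ^ s)
    (hapcn : ∀ a b : GaloisField p n,
      Nat.card {x : GaloisField p n // F (x + a) - c * F x = b} ≤ 2)
    (a b : GaloisField p n) (ha : a ^ p ^ s = a) (hb : b ^ p ^ s = b) :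
    ∀ x : GaloisField p n, F (x + a) - c * F x = b → x ^ p ^ s = x := by
  intro x hx
  have hcard : Nat.card (GaloisField p n) = p ^ (s * m) :=
    hn ▸ GaloisField.card p n (hn ▸ Nat.mul_ne_zero hs.ne' hm.pos.ne')
  have hsol := mapsTo_setOf_add_sub_mul_eq (iterateFrobenius (GaloisField p n) p s) hcoef ha hb hc
  have hsolcard : {x | F (x + a) - c * F x = b}.ncard ≤ 2 := by
    rw [← Nat.card_coe_set_eq]
    exact hapcn a b
  exact isFixedPt_of_mapsTo_of_ncard_le_two (iterateFrobenius_inj _ p s) hsol (toFinite _)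
    hsolcard hx hm (isPeriodicPt_iterateFrobenius hcard x)
end

section
/- Let n = sm with m odd, let g(x) = x^{2^k+1} on F_{2^n} with gcd(n,k) = t and F_{2^t} ⊆ F_{2^s}. Then for all a ∈ F_{2^s} with a ≠ 0 and all b ∈ F_{2^s}, the equation g(x+a) + g(x) = b has no solution x in F_{2^n} \ F_{2^s}. -/
/-- If `v` is fixed by raising to `2^j`, it is fixed by raising to `2^(j*q)`. -/
lemma pow_pow_mul_fix {F : Type*} [Monoid F] (v : F) {j : ℕ} (h : v ^ 2 ^ j = v) :
    ∀ q : ℕ, v ^ 2 ^ (j * q) = v := by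
  intro q
  induction q with
  | zero => simp
  | succ q ih => rw [Nat.mul_succ, pow_add, pow_mul, ih, h]

/-- Euclidean gcd argument for Frobenius fixed points. -/
lemma gcd_fix {F : Type*} [Monoid F] (v : F) :
    ∀ c d : ℕ, v ^ 2 ^ c = v → v ^ 2 ^ d = v → v ^ 2 ^ (Nat.gcd c d) = v := by
  intro c d
  induction c, d using Nat.gcd.induction with
  | H0 d => simpa using fun _ h => h
  | H1 c d hpos ih =>
    intro hc hd
    rw [Nat.gcd_rec]
    apply ih _ hc
    have hdm : c * (d / c) + d % c = d := Nat.div_add_mod d c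
    have : v ^ 2 ^ d = (v ^ 2 ^ (c * (d / c))) ^ 2 ^ (d % c) := by
      rw [← pow_mul, ← pow_add, hdm]
    rw [this, pow_pow_mul_fix v hc] at hd
    exact hd

/-- for the Gold function `g(x) = x^{2^k+1}` on `𝔽_{2^n}`, `n = s·m` with `m` odd,
`gcd(n,k) = t` and `𝔽_{2^t} ⊆ 𝔽_{2^s}` (i.e. `t ∣ s`): for every `a ∈ 𝔽_{2^s}*` and
`b ∈ 𝔽_{2^s}`, the equation `g(x+a) + g(x) = b` has no solution outside `𝔽_{2^s}`. -/
theorem stmt_5 (s m n k t : ℕ) (hs : 0 < s) (hm : Odd m) (hn : n = s * m)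
    (hk1 : 1 ≤ k) (hkn : k < n) (ht : t = Nat.gcd n k) (hts : t ∣ s)
    (a b : GaloisField 2 n) (ha : a ^ 2 ^ s = a) (ha0 : a ≠ 0) (hb : b ^ 2 ^ s = b) :
    ∀ x : GaloisField 2 n,
      (x + a) ^ (2 ^ k + 1) + x ^ (2 ^ k + 1) = b → x ^ 2 ^ s = x := by
  intro x hx
  haveI : Fact (Nat.Prime 2) := ⟨Nat.prime_two⟩
  have hn0 : n ≠ 0 := by omega
  have h2z : (2 : GaloisField 2 n) = 0 := by
    have := CharP.cast_eq_zero (GaloisField 2 n) 2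
    exact_mod_cast this
  have hcard : ∀ y : GaloisField 2 n, y ^ 2 ^ n = y := by
    haveI : Fintype (GaloisField 2 n) := Fintype.ofFinite (GaloisField 2 n)
    intro y
    have h := FiniteField.pow_card y
    have hc : Fintype.card (GaloisField 2 n) = 2 ^ n := by
      rw [← Nat.card_eq_fintype_card]; exact GaloisField.card 2 n hn0
    rwa [hc] at h
  -- expand the equation
  have hE : a * x ^ 2 ^ k + a ^ 2 ^ k * x + a ^ (2 ^ k + 1) = b := by
    have key : (x ^ 2 ^ k + a ^ 2 ^ k) * (x + a) + x ^ 2 ^ k * x = b := by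
      rw [← add_pow_char_pow, ← pow_succ, ← pow_succ] at *
      exact hx
    linear_combination key - x ^ 2 ^ k * x * h2z
  -- apply Frobenius^s to the equation
  have hE' : a * (x ^ 2 ^ s) ^ 2 ^ k + a ^ 2 ^ k * x ^ 2 ^ s + a ^ (2 ^ k + 1) = b := by
    have := congrArg (· ^ 2 ^ s) hE
    rw [add_pow_char_pow, add_pow_char_pow, mul_pow, mul_pow, hb] at this
    rw [show (a ^ 2 ^ k) ^ 2 ^ s = (a ^ 2 ^ s) ^ 2 ^ k by rw [← pow_mul, ← pow_mul, mul_comm],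
        show (x ^ 2 ^ k) ^ 2 ^ s = (x ^ 2 ^ s) ^ 2 ^ k by rw [← pow_mul, ← pow_mul, mul_comm],
        show (a ^ (2 ^ k + 1)) ^ 2 ^ s = (a ^ 2 ^ s) ^ (2 ^ k + 1) by
          rw [← pow_mul, ← pow_mul, mul_comm],
        ha] at this
    exact this
  set u : GaloisField 2 n := x + x ^ 2 ^ s with hu_def
  have hu : a * u ^ 2 ^ k + a ^ 2 ^ k * u = 0 := by
    rw [hu_def, add_pow_char_pow]
    linear_combination hE + hE' + (b - a ^ (2 ^ k + 1)) * h2z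
  have hau : a * u ^ 2 ^ k = a ^ 2 ^ k * u := by
    linear_combination hu - a ^ 2 ^ k * u * h2z
  set v : GaloisField 2 n := u / a with hv_def
  have hv : v ^ 2 ^ k = v := by
    rw [hv_def, div_pow, div_eq_div_iff (pow_ne_zero _ ha0) ha0]
    linear_combination hau
  have hvt : v ^ 2 ^ t = v := by
    rw [ht]
    exact gcd_fix v n k (hcard v) hv
  obtain ⟨d, hd⟩ := hts
  have hvs : v ^ 2 ^ s = v := by
    rw [hd]
    exact pow_pow_mul_fix v hvt d
  have hus : u ^ 2 ^ s = u := by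
    have huav : u = a * v := by
      rw [hv_def, mul_div_cancel₀ _ ha0]
    rw [huav, mul_pow, ha, hvs]
  have hx2s : x ^ 2 ^ (2 * s) = x := by
    rw [hu_def, add_pow_char_pow] at hus
    have : (x ^ 2 ^ s) ^ 2 ^ s = x := by
      have h := hus
      -- x^{2^s} + (x^{2^s})^{2^s} = x + x^{2^s}
      linear_combination h
    rw [← pow_mul, ← pow_add] at this
    rw [show 2 * s = s + s by ring]
    exact this
  have hgcd : Nat.gcd (2 * s) n = s := by
    rw [hn, show 2 * s = s * 2 by ring, Nat.gcd_mul_left]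
    have : Nat.gcd 2 m = 1 := Nat.coprime_two_left.mpr hm
    rw [this, mul_one]
  have := gcd_fix x (2 * s) n hx2s (hcard x)
  rwa [hgcd] at this
end

section
/- Let q be a prime power, n ≥ 1, c ∈ F_q \ {1}, and let f_1, …, f_n : F_q → F_q be functions with c-differential uniformities δ_1, …, δ_n respectively. Let β_1, …, β_n be a basis of F_{q^n} over F_q, and let L_k : F_{q^n} → F_q denote the k-th coordinate map with respect to this basis (so that x = Σ β_k L_k(x) for all x). Then the function F : F_{q^n} → F_{q^n} defined by F(x) = Σ_{k=1}^n β_k f_k(L_k(x)) has c-differential uniformity exactly Π_{k=1}^n δ_k. -/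
/-!
Read in coordinates, the equation `F (x + a) - c • F x = b` is the system of independent
equations `f k (x_k + a_k) - c * f k x_k = b_k`, so its solution set is the product of theirs.
Hence every count is a product of counts bounded by the `δ k`, and choosing `a`, `b`
coordinatewise from maximizing pairs attains `∏ k, δ k`.
-/

namespace Module.Basis

variable {ι R M : Type*} [Fintype ι] [Ring R] [AddCommGroup M] [Module R M]

noncomputable def concat (B : Basis ι R M) (f : ι → R → R) (x : M) : M :=
  ∑ k, f k (B.repr x k) • B k

variable (B : Basis ι R M) (f : ι → R → R) (c : R)

theorem concat_add_sub_smul_concat (x a : M) :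
    B.concat f (x + a) - c • B.concat f x
      = ∑ k, (f k (B.repr x k + B.repr a k) - c * f k (B.repr x k)) • B k := by
  simp only [concat, Finset.smul_sum, ← Finset.sum_sub_distrib, map_add, Finsupp.add_apply,
    sub_smul, smul_smul]

theorem concat_add_sub_smul_concat_eq_iff (x a b : M) :
    B.concat f (x + a) - c • B.concat f x = b ↔
      ∀ k, f k (B.repr x k + B.repr a k) - c * f k (B.repr x k) = B.repr b k := by
  rw [concat_add_sub_smul_concat, B.ext_elem_iff]
  simp only [B.repr_sum_self]

noncomputable def concatDiffSolutionsEquiv (a b : M) :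
    {x : M // B.concat f (x + a) - c • B.concat f x = b} ≃
      ∀ k, {y : R // f k (y + B.repr a k) - c * f k y = B.repr b k} :=
  (B.equivFun.toEquiv.subtypeEquiv fun x => B.concat_add_sub_smul_concat_eq_iff f c x a b).trans
    (Equiv.subtypePiEquivPi (p := fun k y => f k (y + B.repr a k) - c * f k y = B.repr b k))

theorem card_concatDiffSolutions (a b : M) :
    Nat.card {x : M // B.concat f (x + a) - c • B.concat f x = b} =
      ∏ k, Nat.card {y : R // f k (y + B.repr a k) - c * f k y = B.repr b k} := by
  rw [Nat.card_congr (B.concatDiffSolutionsEquiv f c a b), Nat.card_pi]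

end Module.Basis

theorem stmt_6_general (n : ℕ) (K L : Type*) [Field K] [Field L]
    [Algebra K L] (B : Module.Basis (Fin n) K L)
    (c : K)
    (f : Fin n → K → K) (δ : Fin n → ℕ)
    (hbound : ∀ (k : Fin n) (a b : K),
      Nat.card {x : K // f k (x + a) - c * f k x = b} ≤ δ k)
    (hattain : ∀ k : Fin n, ∃ a b : K,
      Nat.card {x : K // f k (x + a) - c * f k x = b} = δ k)
    (F : L → L) (hF : ∀ x : L, F x = ∑ k, f k (B.repr x k) • B k) :
    (∀ a b : L, Nat.card {x : L // F (x + a) - c • F x = b} ≤ ∏ k, δ k) ∧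
    (∃ a b : L, Nat.card {x : L // F (x + a) - c • F x = b} = ∏ k, δ k) := by
  obtain rfl : F = B.concat f := funext hF
  refine ⟨fun a b => ?_, ?_⟩
  · rw [B.card_concatDiffSolutions]
    exact Finset.prod_le_prod' fun k _ => hbound k _ _
  · choose a₀ b₀ h₀ using hattain
    refine ⟨B.equivFun.symm a₀, B.equivFun.symm b₀, ?_⟩
    simp only [B.card_concatDiffSolutions, Module.Basis.equivFun_symm_apply, B.repr_sum_self, h₀]

/-- concatenation. `K = 𝔽_q`, `L = 𝔽_{q^n}` with basis `B`, coordinate maps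
`x ↦ B.repr x k`. If each `f k` has c-differential uniformity `δ k` over `K`
(upper bound attained), then `F(x) = ∑ k, f k (B.repr x k) • B k` has c-differential
uniformity exactly `∏ k, δ k` over `L`. -/
theorem stmt_6 (n : ℕ) (hn : 1 ≤ n) (K L : Type*) [Field K] [Field L]
    [Fintype K] [Fintype L] [Algebra K L] (B : Module.Basis (Fin n) K L)
    (c : K) (hc : c ≠ 1)
    (f : Fin n → K → K) (δ : Fin n → ℕ)
    (hbound : ∀ (k : Fin n) (a b : K),
      Nat.card {x : K // f k (x + a) - c * f k x = b} ≤ δ k)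
    (hattain : ∀ k : Fin n, ∃ a b : K,
      Nat.card {x : K // f k (x + a) - c * f k x = b} = δ k)
    (F : L → L) (hF : ∀ x : L, F x = ∑ k, f k (B.repr x k) • B k) :
    (∀ a b : L, Nat.card {x : L // F (x + a) - c • F x = b} ≤ ∏ k, δ k) ∧
    (∃ a b : L, Nat.card {x : L // F (x + a) - c • F x = b} = ∏ k, δ k) :=
  stmt_6_general n K L B c f δ hbound hattain F hF
end

section
/- Let q be a prime power, n ≥ 1, c ∈ F_q \ {1}, and let f_1, …, f_n : F_q → F_q each be perfect c-nonlinear. Let β_1, …, β_n be a basis of F_{q^n} over F_q with coordinate maps L_k. Then F(x) = Σ_{k=1}^n β_k f_k(L_k(x)) is perfect c-nonlinear on F_{q^n}. -/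
/-! In the coordinates of `B` the map `x ↦ F (x + a) - c • F x` acts coordinatewise, by
`t ↦ f k (t + aₖ) - c * f k t` on the `k`-th coordinate; a coordinatewise map is bijective as soon
as every coordinate map is. -/

namespace Module.Basis

variable {ι R M : Type*} [Fintype ι] [Ring R] [AddCommGroup M] [Module R M]

noncomputable def coordwise (B : Basis ι R M) (g : ι → R → R) (x : M) : M :=
  ∑ k, g k (B.repr x k) • B k

theorem coordwise_eq_comp (B : Basis ι R M) (g : ι → R → R) :
    B.coordwise g = B.equivFun.symm ∘ Pi.map g ∘ B.equivFun := by
  funext x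
  simp [coordwise, equivFun_symm_apply]

theorem bijective_coordwise (B : Basis ι R M) {g : ι → R → R} (hg : ∀ k, (g k).Bijective) :
    (B.coordwise g).Bijective := by
  rw [coordwise_eq_comp]
  exact B.equivFun.symm.bijective.comp ((Function.Bijective.piMap hg).comp B.equivFun.bijective)

theorem coordwise_add_sub_smul (B : Basis ι R M) (g : ι → R → R) (a : M) (c : R) (x : M) :
    B.coordwise g (x + a) - c • B.coordwise g x
      = B.coordwise (fun k t => g k (t + B.repr a k) - c * g k t) x := by
  simp only [coordwise, map_add, Finsupp.add_apply, Finset.smul_sum, smul_smul, sub_smul,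
    Finset.sum_sub_distrib]

end Module.Basis

theorem stmt_7_general (n : ℕ) (K L : Type*) [Field K] [Field L]
    [Algebra K L] (B : Module.Basis (Fin n) K L)
    (c : K)
    (f : Fin n → K → K)
    (hpcn : ∀ (k : Fin n) (a : K), Function.Bijective (fun x : K => f k (x + a) - c * f k x))
    (F : L → L) (hF : ∀ x : L, F x = ∑ k, f k (B.repr x k) • B k) :
    ∀ a : L, Function.Bijective (fun x : L => F (x + a) - c • F x) := by
  obtain rfl : F = B.coordwise f := funext hF
  intro a
  simp only [B.coordwise_add_sub_smul]
  exact B.bijective_coordwise fun k => hpcn k (B.repr a k)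

/-- if `f 1, …, f n : 𝔽_q → 𝔽_q` are all perfect c-nonlinear (`c ≠ 1`), then
`F(x) = ∑ k, f k (B.repr x k) • B k` is perfect c-nonlinear on `𝔽_{q^n}`. -/
theorem stmt_7 (n : ℕ) (hn : 1 ≤ n) (K L : Type*) [Field K] [Field L]
    [Fintype K] [Fintype L] [Algebra K L] (B : Module.Basis (Fin n) K L)
    (c : K) (hc : c ≠ 1)
    (f : Fin n → K → K)
    (hpcn : ∀ (k : Fin n) (a : K), Function.Bijective (fun x : K => f k (x + a) - c * f k x))
    (F : L → L) (hF : ∀ x : L, F x = ∑ k, f k (B.repr x k) • B k) :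
    ∀ a : L, Function.Bijective (fun x : L => F (x + a) - c • F x) :=
  stmt_7_general n K L B c f hpcn F hF
end

section
/- Let p be prime, s | n, c ∈ F_{p^n} nonzero, and let g be induced by a polynomial with coefficients in F_{p^n}. Fix a ∉ F_{p^s} and b ∈ F_{p^n}. Then the number of x ∈ F_{p^n} with x ∉ F_{p^s}, x + a ∈ F_{p^s}, and f(x+a) − c g(x) = b (where f maps F_{p^s} into F_{p^s}) is at most p^s · δ_{g,0}, where δ_{g,0} is the maximum fiber size of g. -/
/-- mixed-case counting. For `a ∉ 𝔽_{p^s}`, `c ≠ 0`, `f` mapping `𝔽_{p^s}` into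
`𝔽_{p^s}`: the number of `x ∉ 𝔽_{p^s}` with `x + a ∈ 𝔽_{p^s}` and `f(x+a) - c·g(x) = b`
is at most `p^s · δ_{g,0}`, where `δ_{g,0}` bounds all fibers of `g`. -/
theorem stmt_9 (p s n : ℕ) [Fact p.Prime] (hs : 0 < s) (hsn : s ∣ n)
    (c : GaloisField p n) (hc : c ≠ 0)
    (f g : GaloisField p n → GaloisField p n)
    (hf : ∀ x : GaloisField p n, x ^ p ^ s = x → (f x) ^ p ^ s = f x)
    (δg0 : ℕ) (hδ : ∀ y : GaloisField p n, Nat.card {x : GaloisField p n // g x = y} ≤ δg0)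
    (a b : GaloisField p n) (ha : ¬ a ^ p ^ s = a) :
    Nat.card {x : GaloisField p n //
      ¬ x ^ p ^ s = x ∧ (x + a) ^ p ^ s = x + a ∧ f (x + a) - c * g x = b} ≤ p ^ s * δg0 := by
  classical
  haveI : Fintype (GaloisField p n) := Fintype.ofFinite _
  set q := p ^ s with hq
  have hp2 : 2 ≤ p := (Fact.out : p.Prime).two_le
  have hq2 : 2 ≤ q := by
    calc 2 = 2 ^ 1 := by norm_num
    _ ≤ p ^ s := Nat.pow_le_pow_left hp2 s |>.trans' (Nat.pow_le_pow_right (by norm_num) hs) |>.trans (le_refl _)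
  -- the key polynomial
  set Q : Polynomial (GaloisField p n) :=
    Polynomial.C (c ^ q) * Polynomial.X ^ q
      - (Polynomial.C c * Polynomial.X + Polynomial.C (b - b ^ q)) with hQdef
  have hQcoeff : Q.coeff q = c ^ q := by
    have h1 : ¬ (1 = q) := by omega
    have h0 : q ≠ 0 := by omega
    rw [hQdef, Polynomial.coeff_sub, Polynomial.coeff_add, Polynomial.coeff_C_mul,
      Polynomial.coeff_X_pow, Polynomial.coeff_C_mul, Polynomial.coeff_X, Polynomial.coeff_C]
    simp [h1, h0]
  have hQ0 : Q ≠ 0 := by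
    intro h
    rw [h, Polynomial.coeff_zero] at hQcoeff
    exact pow_ne_zero q hc hQcoeff.symm
  have hdeg : Q.natDegree ≤ q := by
    refine le_trans (Polynomial.natDegree_sub_le _ _) (max_le ?_ ?_)
    · exact le_trans (Polynomial.natDegree_C_mul_le _ _) (le_of_eq (Polynomial.natDegree_X_pow q))
    · refine le_trans (Polynomial.natDegree_add_le _ _) (max_le ?_ ?_)
      · exact le_trans (Polynomial.natDegree_C_mul_le _ _)
          (le_trans Polynomial.natDegree_X_le (by omega))
      · exact le_trans (le_of_eq (Polynomial.natDegree_C _)) (Nat.zero_le q)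
  -- roots
  set T : Finset (GaloisField p n) := Q.roots.toFinset with hT
  have hTcard : T.card ≤ q := by
    calc T.card ≤ Multiset.card Q.roots := Q.roots.toFinset_card_le
    _ ≤ Q.natDegree := Polynomial.card_roots' Q
    _ ≤ q := hdeg
  -- every solution x has g x ∈ T
  have hchar : (q : ℕ) = p ^ s := rfl
  have hroot : ∀ x : GaloisField p n,
      (x + a) ^ q = x + a → f (x + a) - c * g x = b → g x ∈ T := by
    intro x hxa heq
    have hfrob : (f (x + a) - c * g x) ^ q = f (x + a) ^ q - (c * g x) ^ q := by
      rw [hq]; exact sub_pow_char_pow _ _ _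
    have h2 : f (x + a) - c ^ q * (g x) ^ q = b ^ q := by
      have := congrArg (· ^ q) heq
      rw [hfrob, hf (x + a) hxa, mul_pow] at this
      exact this
    have h3 : c ^ q * (g x) ^ q = c * g x + (b - b ^ q) := by
      have h4 : f (x + a) = b + c * g x := by linear_combination heq
      rw [h4] at h2
      linear_combination -h2
    have heval : Q.IsRoot (g x) := by
      simp only [hQdef, Polynomial.IsRoot, Polynomial.eval_sub, Polynomial.eval_add,
        Polynomial.eval_mul, Polynomial.eval_pow, Polynomial.eval_C, Polynomial.eval_X]
      linear_combination h3
    simp only [hT, Multiset.mem_toFinset]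
    exact (Polynomial.mem_roots hQ0).2 heval
  -- counting
  have hcard : Nat.card {x : GaloisField p n //
      ¬ x ^ p ^ s = x ∧ (x + a) ^ p ^ s = x + a ∧ f (x + a) - c * g x = b}
      = (Finset.univ.filter (fun x : GaloisField p n =>
          ¬ x ^ p ^ s = x ∧ (x + a) ^ p ^ s = x + a ∧ f (x + a) - c * g x = b)).card := by
    rw [Nat.card_eq_fintype_card, Fintype.card_subtype]
  rw [hcard]
  have hsub : (Finset.univ.filter (fun x : GaloisField p n =>
        ¬ x ^ p ^ s = x ∧ (x + a) ^ p ^ s = x + a ∧ f (x + a) - c * g x = b))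
      ⊆ T.biUnion (fun y => Finset.univ.filter (fun x => g x = y)) := by
    intro x hx
    simp only [Finset.mem_filter, Finset.mem_univ, true_and] at hx
    refine Finset.mem_biUnion.2 ⟨g x, hroot x hx.2.1 hx.2.2, ?_⟩
    simp
  refine le_trans (Finset.card_le_card hsub) ?_
  refine le_trans (Finset.card_biUnion_le) ?_
  have hfib : ∀ y : GaloisField p n,
      (Finset.univ.filter (fun x => g x = y)).card ≤ δg0 := by
    intro y
    have := hδ y
    rwa [Nat.card_eq_fintype_card, Fintype.card_subtype] at this
  calc (∑ y ∈ T, (Finset.univ.filter (fun x => g x = y)).card)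
      ≤ ∑ _y ∈ T, δg0 := Finset.sum_le_sum (fun y _ => hfib y)
    _ = T.card * δg0 := by rw [Finset.sum_const, smul_eq_mul]
    _ ≤ p ^ s * δg0 := Nat.mul_le_mul_right _ hTcard
end

section
/- Let n = sm with m odd, g(x) = x^{2^k+1} on F_{2^n} with gcd(n,k) = t, F_{2^t} ⊆ F_{2^s}, and n/t odd. Fix α ∈ F_{2^s} nonzero and define G(x) = x^{2^k+1} + α if x ∈ F_{2^s}, and G(x) = x^{2^k+1} otherwise. Then for every c ∈ F_{2^t} \ {1}, the c-differential uniformity of G over F_{2^n} is at most 3. -/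
/-!
Write `q = 2^k`. Since `c^q = c ≠ 1`, putting `β = a / (1 + c)` gives
`(x + a)^(q+1) - c x^(q+1) = (1 + c)(x + β)^(q+1) + const`, so `x ↦ g(x + a) - c g(x)` is
injective because the Gold map `g` is: `u^(q+1) = 1` forces `u^(2^(2k)) = u`, hence
`u^(2^gcd(2k,n)) = u`, and `gcd(2k, n) = gcd(n, k)` divides `k` when `n / gcd(n, k)` is odd,
so `u = u^q = u⁻¹`, i.e. `u = 1`.
The perturbation by `α` on the additive subgroup `𝔽_{2^s}` changes `G(x + a) - c G(x)` only by a
constant depending on which of `x`, `x + a` lie in `𝔽_{2^s}`, and at most three of these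
combinations occur, so each equation has at most three solutions.
-/

open Function

theorem isPeriodicPt_pow_iff {M : Type*} [Monoid M] {p n : ℕ} {x : M} :
    IsPeriodicPt (· ^ p) n x ↔ x ^ p ^ n = x := by
  rw [IsPeriodicPt, IsFixedPt, pow_iterate]

theorem Nat.gcd_two_mul_of_odd_div_gcd {n k : ℕ} (h : Odd (n / n.gcd k)) :
    (2 * k).gcd n = n.gcd k := by
  have ht : n.gcd k ≠ 0 := by
    rintro ht
    simp [ht] at h
  obtain ⟨k', hk⟩ := Nat.gcd_dvd_right n k
  obtain ⟨n', hn⟩ := Nat.gcd_dvd_left n k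
  have hn' : n / n.gcd k = n' := by
    nth_rw 1 [hn]; exact Nat.mul_div_cancel_left _ (Nat.pos_of_ne_zero ht)
  rw [hn'] at h
  calc (2 * k).gcd n = n.gcd k * (2 * k').gcd n' := by
        rw [← Nat.gcd_mul_left, ← hn, mul_left_comm, ← hk]
    _ = n.gcd k * k'.gcd n' := by rw [Nat.Coprime.gcd_mul_left_cancel _ (Nat.coprime_two_left.2 h)]
    _ = n.gcd k := by rw [← Nat.gcd_mul_left, ← hn, ← hk, Nat.gcd_comm]

section Gold

variable {F : Type*} [Field F] [Finite F] [CharP F 2] {n k : ℕ}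

theorem eq_one_of_pow_two_pow_add_one_eq_one (hF : Nat.card F = 2 ^ n)
    (hnk : Odd (n / n.gcd k)) {u : F} (hu : u ^ (2 ^ k + 1) = 1) : u = 1 := by
  have := Fintype.ofFinite F
  have hinv : u ^ 2 ^ k = u⁻¹ := eq_inv_of_mul_eq_one_left (by rwa [← pow_succ])
  have h2k : IsPeriodicPt (· ^ 2) (2 * k) u := by
    rw [isPeriodicPt_pow_iff, two_mul, pow_add, pow_mul, hinv, inv_pow, hinv, inv_inv]
  have hn : IsPeriodicPt (· ^ 2) n u := by
    rw [isPeriodicPt_pow_iff, ← hF, Nat.card_eq_fintype_card, FiniteField.pow_card]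
  have hk : u ^ 2 ^ k = u := isPeriodicPt_pow_iff.1 <|
    (h2k.gcd hn).trans_dvd (Nat.gcd_two_mul_of_odd_div_gcd hnk ▸ Nat.gcd_dvd_right n k)
  rw [pow_succ, hk, mul_self_eq_one_iff, CharTwo.neg_eq, or_self] at hu
  exact hu

theorem pow_two_pow_add_one_injective (hF : Nat.card F = 2 ^ n) (hnk : Odd (n / n.gcd k)) :
    Injective fun x : F => x ^ (2 ^ k + 1) := by
  intro y z (h : y ^ (2 ^ k + 1) = z ^ (2 ^ k + 1))
  rcases eq_or_ne z 0 with rfl | hz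
  · simpa using h
  · refine (div_eq_one_iff_eq hz).1 (eq_one_of_pow_two_pow_add_one_eq_one hF hnk ?_)
    rw [div_pow, h, div_self (pow_ne_zero _ hz)]

end Gold

theorem add_pow_two_pow_add_one_sub_mul {R : Type*} [CommRing R] [CharP R 2] {k : ℕ}
    {a c β : R} (hc : c ^ 2 ^ k = c) (hβ : (1 + c) * β = a) (x : R) :
    (x + a) ^ (2 ^ k + 1) - c * x ^ (2 ^ k + 1) =
      (1 + c) * (x + β) ^ (2 ^ k + 1) + (a ^ (2 ^ k + 1) - (1 + c) * β ^ (2 ^ k + 1)) := by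
  have haq : a ^ 2 ^ k = (1 + c) * β ^ 2 ^ k := by
    rw [← hβ, mul_pow, add_pow_char_pow, one_pow, hc]
  simp only [pow_succ _ (2 ^ k), add_pow_char_pow]
  linear_combination (-(x ^ 2 ^ k)) * hβ + x * haq
    - c * x ^ 2 ^ k * x * (CharTwo.two_eq_zero : (2 : R) = 0)

theorem injective_sub_mul_pow_two_pow_add_one {F : Type*} [Field F] [CharP F 2] {k : ℕ}
    (hg : Injective fun x : F => x ^ (2 ^ k + 1)) {c : F} (hc : c ^ 2 ^ k = c) (hc1 : c ≠ 1)
    (a : F) : Injective fun x => (x + a) ^ (2 ^ k + 1) - c * x ^ (2 ^ k + 1) := by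
  have h1c : 1 + c ≠ 0 := fun h => hc1 (by rw [← CharTwo.add_eq_zero.1 h])
  intro x y hxy
  simp only [add_pow_two_pow_add_one_sub_mul hc (mul_div_cancel₀ a h1c)] at hxy
  exact add_right_cancel (hg (mul_left_cancel₀ h1c (add_right_cancel hxy)))

theorem Nat.card_subtype_le_of_injective {α β : Type*} {p : α → Prop} {f : α → β}
    (hf : Injective f) (s : Finset β) (hs : ∀ x, p x → f x ∈ s) :
    Nat.card {x // p x} ≤ s.card := by
  rw [← Nat.card_eq_finsetCard]
  exact Nat.card_le_card_of_injective (fun x => ⟨f x, hs x x.2⟩)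
    fun x y hxy => Subtype.ext (hf (congrArg Subtype.val hxy))

theorem card_sub_mul_add_ite_mem_le_three {R : Type*} [CommRing R] (K : AddSubgroup R)
    [DecidablePred (· ∈ K)] (g G : R → R) (α a b c : R)
    (hG : ∀ x, G x = g x + if x ∈ K then α else 0)
    (hD : Injective fun x => g (x + a) - c * g x) :
    Nat.card {x // G (x + a) - c * G x = b} ≤ 3 := by
  classical
  by_cases ha : a ∈ K
  · refine (Nat.card_subtype_le_of_injective hD {b - (α - c * α), b} ?_).trans
      (Finset.card_le_two.trans (by norm_num))
    intro x hx
    simp only [hG, Finset.mem_insert, Finset.mem_singleton] at hx ⊢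
    by_cases hxK : x ∈ K
    · have hxaK : x + a ∈ K := K.add_mem hxK ha
      simp only [hxK, hxaK, if_true] at hx
      left; linear_combination hx
    · have hxaK : x + a ∉ K := fun h => hxK ((K.add_mem_cancel_right ha).1 h)
      simp only [hxK, hxaK, if_false] at hx
      right; linear_combination hx
  · refine (Nat.card_subtype_le_of_injective hD {b + c * α, b - α, b} ?_).trans
      Finset.card_le_three
    intro x hx
    simp only [hG, Finset.mem_insert, Finset.mem_singleton] at hx ⊢
    by_cases hxK : x ∈ K
    · have hxaK : x + a ∉ K := fun h => ha ((K.add_mem_cancel_left hxK).1 h)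
      simp only [hxK, hxaK, if_true, if_false] at hx
      left; linear_combination hx
    · by_cases hxaK : x + a ∈ K
      · simp only [hxK, hxaK, if_true, if_false] at hx
        right; left; linear_combination hx
      · simp only [hxK, hxaK, if_false] at hx
        right; right; linear_combination hx

theorem stmt_11_general (s n k t : ℕ) (ht : t = Nat.gcd n k) (hnt : Odd (n / t))
    (α : GaloisField 2 n) (G : GaloisField 2 n → GaloisField 2 n)
    (hG1 : ∀ x : GaloisField 2 n, x ^ 2 ^ s = x → G x = x ^ (2 ^ k + 1) + α)
    (hG2 : ∀ x : GaloisField 2 n, ¬ x ^ 2 ^ s = x → G x = x ^ (2 ^ k + 1))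
    (c : GaloisField 2 n) (hc : c ^ 2 ^ t = c) (hc1 : c ≠ 1) :
    ∀ a b : GaloisField 2 n,
      Nat.card {x : GaloisField 2 n // G (x + a) - c * G x = b} ≤ 3 := by
  classical
  intro a b
  subst ht
  have hn0 : n ≠ 0 := by
    rintro rfl
    simp at hnt
  let K := ((iterateFrobenius (GaloisField 2 n) 2 s).eqLocusField (RingHom.id _)).toAddSubgroup
  have hG : ∀ x, G x = x ^ (2 ^ k + 1) + if x ∈ K then α else 0 := by
    intro x
    by_cases hx : x ^ 2 ^ s = x
    · have hxK : x ∈ K := hx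
      rw [hG1 x hx, if_pos hxK]
    · have hxK : x ∉ K := hx
      rw [hG2 x hx, if_neg hxK, add_zero]
  have hck : c ^ 2 ^ k = c :=
    isPeriodicPt_pow_iff.1 ((isPeriodicPt_pow_iff.2 hc).trans_dvd (Nat.gcd_dvd_right n k))
  exact card_sub_mul_add_ite_mem_le_three K _ G α a b c hG
    (injective_sub_mul_pow_two_pow_add_one
      (pow_two_pow_add_one_injective (GaloisField.card 2 n hn0) hnt) hck hc1 a)

/-- `n = s·m` with `m` odd, Gold function `x^{2^k+1}` with `gcd(n,k) = t`,
`t ∣ s`, `n/t` odd, `α ∈ 𝔽_{2^s}*`; `G(x) = x^{2^k+1} + α` on `𝔽_{2^s}`, `G(x) = x^{2^k+1}`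
outside. Then for every `c ∈ 𝔽_{2^t} \ {1}`, the c-differential uniformity of `G` is ≤ 3. -/
theorem stmt_11 (s m n k t : ℕ) (hs : 0 < s) (hm : Odd m) (hn : n = s * m)
    (hk1 : 1 ≤ k) (hkn : k < n) (ht : t = Nat.gcd n k) (hts : t ∣ s) (hnt : Odd (n / t))
    (α : GaloisField 2 n) (hα : α ^ 2 ^ s = α) (hα0 : α ≠ 0)
    (G : GaloisField 2 n → GaloisField 2 n)
    (hG1 : ∀ x : GaloisField 2 n, x ^ 2 ^ s = x → G x = x ^ (2 ^ k + 1) + α)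
    (hG2 : ∀ x : GaloisField 2 n, ¬ x ^ 2 ^ s = x → G x = x ^ (2 ^ k + 1))
    (c : GaloisField 2 n) (hc : c ^ 2 ^ t = c) (hc1 : c ≠ 1) :
    ∀ a b : GaloisField 2 n,
      Nat.card {x : GaloisField 2 n // G (x + a) - c * G x = b} ≤ 3 :=
  stmt_11_general s n k t ht hnt α G hG1 hG2 c hc hc1
end

section
/- Let n = sm with n odd, g(x) = x^{2^k+1} on F_{2^n} with gcd(n,k) = 1, and fix α ∈ F_{2^s} nonzero. Define G(x) = x^{2^k+1} + α for x ∈ F_{2^s} and G(x) = x^{2^k+1} otherwise. Then for every c ∈ F_{2^s} \ {1}, the c-differential uniformity of G over F_{2^n} is at most 6; moreover if 3 does not divide m, it is at most 5. -/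
set_option linter.unusedSectionVars false
set_option maxHeartbeats 1000000

namespace Stmt12


variable {F : Type*} [Field F] [Fintype F] [CharP F 2]

lemma htwo : (2 : F) = 0 := CharTwo.two_eq_zero

lemma ppe (x : F) (i j : ℕ) : (x ^ 2 ^ i) ^ 2 ^ j = x ^ 2 ^ (i + j) := by
  rw [← pow_mul, ← pow_add]

lemma frobinj (r : ℕ) {z1 z2 : F} (h : z1 ^ 2 ^ r = z2 ^ 2 ^ r) : z1 = z2 := by
  have h2 : (z1 - z2) ^ 2 ^ r = 0 := by
    rw [sub_pow_char_pow, h, sub_self]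
  have h3 : z1 - z2 = 0 := (pow_eq_zero_iff (Nat.pos_of_ne_zero ?_).ne').mp h2
  · exact sub_eq_zero.mp h3
  · exact (Nat.pow_eq_zero.not.mpr (by simp))

lemma fixmul {x : F} {i : ℕ} (h : x ^ 2 ^ i = x) : ∀ t, x ^ 2 ^ (i * t) = x := by
  intro t
  induction t with
  | zero => simp
  | succ t ih => rw [Nat.mul_succ, ← ppe, ih, h]

lemma fixgcd : ∀ (i j : ℕ) (y : F), y ^ 2 ^ i = y → y ^ 2 ^ j = y → y ^ 2 ^ (Nat.gcd i j) = y := by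
  intro i j
  induction i, j using Nat.gcd.induction with
  | H0 j => intro y _ hj; simpa using hj
  | H1 i j hi ih =>
    intro y hyi hyj
    rw [Nat.gcd_rec]
    apply ih _ _ hyi
    -- y ^ 2 ^ (j % i) = y
    have h1 : (y ^ 2 ^ (j % i)) ^ 2 ^ (i * (j / i)) = y ^ 2 ^ (i * (j / i)) := by
      rw [ppe, fixmul hyi]
      rw [Nat.mod_add_div]
      exact hyj
    exact frobinj _ (by rw [h1, fixmul hyi])


lemma sq_fix {y : F} (h : y ^ 2 ^ 1 = y) : y = 0 ∨ y = 1 := by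
  have h2 : y * (y - 1) = 0 := by
    have : y ^ 2 = y := by simpa using h
    linear_combination this
  rcases mul_eq_zero.mp h2 with h | h
  · exact Or.inl h
  · exact Or.inr (sub_eq_zero.mp h)


lemma K0 {n : ℕ} (hcard : Fintype.card F = 2 ^ n) (x : F) : x ^ 2 ^ n = x := by
  rw [← hcard]; exact FiniteField.pow_card x

lemma fix_one {n k : ℕ} (hcard : Fintype.card F = 2 ^ n) (hgcd : Nat.gcd n k = 1)
    {y : F} (h : y ^ 2 ^ k = y) : y = 0 ∨ y = 1 := by
  have := fixgcd k n y h (K0 hcard y)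
  rw [Nat.gcd_comm, hgcd] at this
  exact sq_fix this

lemma K2 {n k : ℕ} (hcard : Fintype.card F = 2 ^ n) (hnodd : Odd n)
    (hgcd : Nat.gcd n k = 1) {t : F} (h : t ^ (2 ^ k + 1) = 1) : t = 1 := by
  have ht0 : t ≠ 0 := by
    rintro rfl
    rw [zero_pow (by positivity)] at h
    exact zero_ne_one h
  have e1 : (2 ^ k + 1) * (2 ^ k - 1) + 1 = 2 ^ (2 * k) := by
    obtain ⟨Y, hY⟩ : ∃ Y, 2 ^ k = Y + 1 :=
      ⟨2 ^ k - 1, by have := Nat.one_le_two_pow (n := k); omega⟩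
    rw [mul_comm 2 k, pow_mul, hY]
    simp only [Nat.add_sub_cancel]
    ring
  have h2k : t ^ 2 ^ (2 * k) = t := by
    rw [← e1, pow_add, pow_mul, h, one_pow, one_mul, pow_one]
  have hco : Nat.gcd n (2 * k) = 1 := by
    have h2 : Nat.Coprime n 2 := (Nat.coprime_two_right).mpr hnodd
    have hk : Nat.Coprime n k := hgcd
    exact (Nat.Coprime.mul_right h2 hk)
  rcases fix_one hcard hco h2k with h0 | h1
  · exact absurd h0 ht0
  · exact h1

lemma fix_of_fix2 {n s m : ℕ} (hcard : Fintype.card F = 2 ^ n) (hn : n = s * m)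
    (hm : Odd m) {x : F} (h : x ^ 2 ^ (s * 2) = x) : x ^ 2 ^ s = x := by
  obtain ⟨j, hj⟩ := hm
  have h1 : x ^ 2 ^ (s * 2 * j) = x := fixmul h j
  have h2 : (x ^ 2 ^ (s * 2 * j)) ^ 2 ^ s = x ^ 2 ^ n := by
    rw [ppe]; congr 1; congr 1; rw [hn, hj]; ring
  rw [h1, K0 hcard] at h2
  exact h2

lemma fix_of_fix3 {n s m : ℕ} (hcard : Fintype.card F = 2 ^ n) (hn : n = s * m)
    (hm : Odd m) (h3m : ¬ 3 ∣ m) {x : F} (h : x ^ 2 ^ (s * 3) = x) : x ^ 2 ^ s = x := by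
  have hmod : m % 3 = 1 ∨ m % 3 = 2 := by omega
  rcases hmod with h1 | h2
  · obtain ⟨j, hj⟩ : ∃ j, m = 3 * j + 1 := ⟨m / 3, by omega⟩
    have ha : x ^ 2 ^ (s * 3 * j) = x := fixmul h j
    have h2 : (x ^ 2 ^ (s * 3 * j)) ^ 2 ^ s = x ^ 2 ^ n := by
      rw [ppe]; congr 1; congr 1; rw [hn, hj]; ring
    rw [ha, K0 hcard] at h2
    exact h2
  · obtain ⟨j, hj⟩ : ∃ j, m = 3 * j + 2 := ⟨m / 3, by omega⟩
    have ha : x ^ 2 ^ (s * 3 * j) = x := fixmul h j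
    have h2 : (x ^ 2 ^ (s * 3 * j)) ^ 2 ^ (s * 2) = x ^ 2 ^ n := by
      rw [ppe]; congr 1; congr 1; rw [hn, hj]; ring
    rw [ha, K0 hcard] at h2
    exact fix_of_fix2 hcard hn hm h2



variable {F : Type*} [Field F] [Fintype F] [CharP F 2]


lemma core {n k : ℕ} (hcard : Fintype.card F = 2 ^ n) (hgcd : Nat.gcd n k = 1)
    (a c b : F) (hc1 : c ≠ 1) {x0 x1 x2 x3 : F}
    (e0 : (x0 + a) ^ (2 ^ k + 1) + c * x0 ^ (2 ^ k + 1) = b)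
    (e1 : (x1 + a) ^ (2 ^ k + 1) + c * x1 ^ (2 ^ k + 1) = b)
    (e2 : (x2 + a) ^ (2 ^ k + 1) + c * x2 ^ (2 ^ k + 1) = b)
    (e3 : (x3 + a) ^ (2 ^ k + 1) + c * x3 ^ (2 ^ k + 1) = b)
    (d01 : x0 ≠ x1) (d02 : x0 ≠ x2) (d03 : x0 ≠ x3)
    (d12 : x1 ≠ x2) (d13 : x1 ≠ x3) (d23 : x2 ≠ x3) : False := by
  have h2 : (2 : F) = 0 := CharTwo.two_eq_zero
  have he : (1 : F) + c ≠ 0 := by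
    intro h; apply hc1; linear_combination h - h2
  have frobk : ∀ u v : F, (u + v) ^ 2 ^ k = u ^ 2 ^ k + v ^ 2 ^ k := fun u v =>
    add_pow_char_pow u v 2 k
  set q := 2 ^ k with hq
  set A := (1 + c) * x0 + a with hA
  set B := (1 + c) * x0 ^ q + a ^ q with hB
  have key : ∀ z : F, z ≠ 0 →
      ((x0 + z) + a) ^ (q + 1) + c * (x0 + z) ^ (q + 1) = b →
      B * (z⁻¹) ^ q + A * z⁻¹ = 1 + c := by
    intro z hz hez
    have hzq : z ^ q ≠ 0 := pow_ne_zero _ hz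
    simp only [pow_succ, frobk] at hez e0
    rw [inv_pow]
    field_simp
    linear_combination (hez - e0) - ((1 + c) * z * z ^ q) * h2
  have h1 := key (x1 - x0) (sub_ne_zero.mpr (Ne.symm d01)) (by
    rw [show x0 + (x1 - x0) = x1 by ring]; exact e1)
  have h2' := key (x2 - x0) (sub_ne_zero.mpr (Ne.symm d02)) (by
    rw [show x0 + (x2 - x0) = x2 by ring]; exact e2)
  have h3' := key (x3 - x0) (sub_ne_zero.mpr (Ne.symm d03)) (by
    rw [show x0 + (x3 - x0) = x3 by ring]; exact e3)
  set t1 := (x1 - x0)⁻¹ with ht1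
  set t2 := (x2 - x0)⁻¹ with ht2
  set t3 := (x3 - x0)⁻¹ with ht3
  have hne1 : (x1 - x0) ≠ 0 := sub_ne_zero.mpr (Ne.symm d01)
  have hne2 : (x2 - x0) ≠ 0 := sub_ne_zero.mpr (Ne.symm d02)
  have hne3 : (x3 - x0) ≠ 0 := sub_ne_zero.mpr (Ne.symm d03)
  have ht12 : t1 ≠ t2 := by
    intro h; exact d12 (by linear_combination inv_injective h)
  have ht13 : t1 ≠ t3 := by
    intro h; exact d13 (by linear_combination inv_injective h)
  have ht23 : t2 ≠ t3 := by
    intro h; exact d23 (by linear_combination inv_injective h)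
  set u := t1 - t2 with hu0
  set v := t1 - t3 with hv0
  have hune : u ≠ 0 := sub_ne_zero.mpr ht12
  have hvne : v ≠ 0 := sub_ne_zero.mpr ht13
  have huv : u ≠ v := by
    intro h; exact ht23 (by linear_combination -h)
  have hu : B * u ^ q + A * u = 0 := by
    rw [hu0, hq, sub_pow_char_pow]
    linear_combination h1 - h2'
  have hv : B * v ^ q + A * v = 0 := by
    rw [hv0, hq, sub_pow_char_pow]
    linear_combination h1 - h3'
  by_cases hBz : B = 0
  · have hAz : A = 0 := by
      rw [hBz, zero_mul, zero_add] at hu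
      rcases mul_eq_zero.mp hu with h | h
      · exact h
      · exact absurd h hune
    apply he
    rw [← h1, hBz, hAz, zero_mul, zero_mul, add_zero]
  · have hBuv : B * (u ^ q * v - v ^ q * u) = 0 := by
      linear_combination v * hu - u * hv
    have huvq : u ^ q * v = v ^ q * u :=
      sub_eq_zero.mp ((mul_eq_zero.mp hBuv).resolve_left hBz)
    have hyq : (u * v⁻¹) ^ q = u * v⁻¹ := by
      rw [mul_pow, inv_pow]
      have hvq : v ^ q ≠ 0 := pow_ne_zero _ hvne
      field_simp
      linear_combination huvq
    rcases fix_one hcard hgcd (hq ▸ hyq) with h | h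
    · rcases mul_eq_zero.mp h with h | h
      · exact hune h
      · exact hvne (inv_eq_zero.mp h)
    · apply huv
      have : u = v := by
        field_simp at h
        exact h
      exact this


variable {F : Type*} [Field F] [Fintype F] [CharP F 2]



lemma sigma_eq {s k : ℕ} {c x a b' : F} (hc : c ^ 2 ^ s = c) (hx : x ^ 2 ^ s = x)
    (E : (x + a) ^ (2 ^ k + 1) + c * x ^ (2 ^ k + 1) = b') :
    (x + a ^ 2 ^ s) ^ (2 ^ k + 1) + c * x ^ (2 ^ k + 1) = b' ^ 2 ^ s := by
  have h := congrArg (· ^ 2 ^ s) E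
  rw [add_pow_char_pow, mul_pow, pow_right_comm (x + a), pow_right_comm x,
    add_pow_char_pow, hx, hc] at h
  exact h

lemma tail {n s m k : ℕ} (hcard : Fintype.card F = 2 ^ n) (hn : n = s * m) (hm : Odd m)
    (hgcd : Nat.gcd n k = 1) {a d z : F} (hd : d = a ^ 2 ^ s - a) (ha : a ^ 2 ^ s ≠ a)
    (hzS : z ^ 2 ^ s = z) (hrel : d * z ^ 2 ^ k = d ^ 2 ^ k * z) : z = 0 := by
  have h2 : (2 : F) = 0 := CharTwo.two_eq_zero
  have hdne : d ≠ 0 := by rw [hd]; exact sub_ne_zero.mpr ha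
  by_contra hz
  have hdq : d ^ 2 ^ k ≠ 0 := pow_ne_zero _ hdne
  have hy : (z * d⁻¹) ^ 2 ^ k = z * d⁻¹ := by
    rw [mul_pow, inv_pow]
    field_simp
    linear_combination hrel
  rcases fix_one hcard hgcd hy with h | h
  · rcases mul_eq_zero.mp h with h | h
    · exact hz h
    · exact hdne (inv_eq_zero.mp h)
  · have hzd : z = d := by
      field_simp at h
      exact h
    have hdS : d ^ 2 ^ s = d := by rw [← hzd, hzS]
    have ha2 : a ^ 2 ^ (s * 2) = a := by
      have h1 : (a ^ 2 ^ s) ^ 2 ^ s - a ^ 2 ^ s = a ^ 2 ^ s - a := by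
        rw [← sub_pow_char_pow, ← hd, hdS, hd]
      rw [show s * 2 = s + s by ring, ← ppe]
      linear_combination h1 + (a ^ 2 ^ s - a) * h2
    exact ha (fix_of_fix2 hcard hn hm ha2)

lemma sol_S_unique {n s m k : ℕ} (hcard : Fintype.card F = 2 ^ n) (hn : n = s * m)
    (hm : Odd m) (hgcd : Nat.gcd n k = 1)
    {a c b' : F} (ha : a ^ 2 ^ s ≠ a) (hc : c ^ 2 ^ s = c)
    {x1 x2 : F} (hx1 : x1 ^ 2 ^ s = x1) (hx2 : x2 ^ 2 ^ s = x2)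
    (E1 : (x1 + a) ^ (2 ^ k + 1) + c * x1 ^ (2 ^ k + 1) = b')
    (E2 : (x2 + a) ^ (2 ^ k + 1) + c * x2 ^ (2 ^ k + 1) = b') : x1 = x2 := by
  have h2 : (2 : F) = 0 := CharTwo.two_eq_zero
  have frobk : ∀ u v : F, (u + v) ^ 2 ^ k = u ^ 2 ^ k + v ^ 2 ^ k := fun u v =>
    add_pow_char_pow u v 2 k
  have E1' := sigma_eq hc hx1 E1
  have E2' := sigma_eq hc hx2 E2
  have hrel : (a ^ 2 ^ s - a) * (x1 - x2) ^ 2 ^ k = (a ^ 2 ^ s - a) ^ 2 ^ k * (x1 - x2) := by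
    simp only [pow_succ, frobk] at E1 E2 E1' E2'
    rw [sub_pow_char_pow, sub_pow_char_pow]
    linear_combination E1' - E1 - E2' + E2 + ((a ^ 2 ^ s) ^ 2 ^ k * (x2 - x1) + a ^ 2 ^ k * (x1 - x2)) * h2
  have hz0 : x1 - x2 = 0 := tail hcard hn hm hgcd rfl ha
    (by rw [sub_pow_char_pow, hx1, hx2]) hrel
  linear_combination hz0



lemma sol_aS_unique {n s m k : ℕ} (hcard : Fintype.card F = 2 ^ n) (hn : n = s * m)
    (hnodd : Odd n) (hm : Odd m) (hgcd : Nat.gcd n k = 1)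
    {a c b'' : F} (ha : a ^ 2 ^ s ≠ a) (hc : c ^ 2 ^ s = c)
    {x1 x2 : F} (hy1 : (x1 + a) ^ 2 ^ s = x1 + a) (hy2 : (x2 + a) ^ 2 ^ s = x2 + a)
    (E1 : (x1 + a) ^ (2 ^ k + 1) + c * x1 ^ (2 ^ k + 1) = b'')
    (E2 : (x2 + a) ^ (2 ^ k + 1) + c * x2 ^ (2 ^ k + 1) = b'') : x1 = x2 := by
  have h2 : (2 : F) = 0 := CharTwo.two_eq_zero
  have frobk : ∀ u v : F, (u + v) ^ 2 ^ k = u ^ 2 ^ k + v ^ 2 ^ k := fun u v =>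
    add_pow_char_pow u v 2 k
  by_cases hc0 : c = 0
  · subst hc0
    rw [zero_mul, add_zero] at E1 E2
    have hw : (x1 + a) ^ (2 ^ k + 1) = (x2 + a) ^ (2 ^ k + 1) := E1.trans E2.symm
    by_cases hw2 : x2 + a = 0
    · rw [hw2, zero_pow (by positivity)] at hw
      have h0 : x1 + a = 0 := pow_eq_zero_iff (by positivity) |>.mp hw
      have := h0.trans hw2.symm
      exact add_right_cancel this
    · have ht : ((x1 + a) * (x2 + a)⁻¹) ^ (2 ^ k + 1) = 1 := by
        rw [mul_pow, inv_pow, hw]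
        field_simp
      have := K2 hcard hnodd hgcd ht
      field_simp at this
      exact add_right_cancel this
  · -- σ versions: raise E_i to 2 ^ s
    have sigma2 : ∀ y : F, y ^ 2 ^ s = y →
        y ^ (2 ^ k + 1) + c * (y - a) ^ (2 ^ k + 1) = b'' →
        y ^ (2 ^ k + 1) + c * (y - a ^ 2 ^ s) ^ (2 ^ k + 1) = b'' ^ 2 ^ s := by
      intro y hy hE
      have h := congrArg (· ^ 2 ^ s) hE
      rw [add_pow_char_pow, mul_pow, pow_right_comm y, pow_right_comm (y - a),
        sub_pow_char_pow, hy, hc] at h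
      exact h
    have hx1e : x1 = (x1 + a) - a := by ring
    have hx2e : x2 = (x2 + a) - a := by ring
    have E1y : (x1 + a) ^ (2 ^ k + 1) + c * ((x1 + a) - a) ^ (2 ^ k + 1) = b'' := by
      rw [← hx1e]; exact E1
    have E2y : (x2 + a) ^ (2 ^ k + 1) + c * ((x2 + a) - a) ^ (2 ^ k + 1) = b'' := by
      rw [← hx2e]; exact E2
    have E1' := sigma2 _ hy1 E1y
    have E2' := sigma2 _ hy2 E2y
    set y1 := x1 + a
    set y2 := x2 + a
    have hrel : (a ^ 2 ^ s - a) * (y1 - y2) ^ 2 ^ k = (a ^ 2 ^ s - a) ^ 2 ^ k * (y1 - y2) := by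
      have hcc : c * ((a ^ 2 ^ s - a) * (y1 - y2) ^ 2 ^ k) =
          c * ((a ^ 2 ^ s - a) ^ 2 ^ k * (y1 - y2)) := by
        simp only [pow_succ, sub_pow_char_pow] at E1y E2y E1' E2'
        rw [sub_pow_char_pow, sub_pow_char_pow]
        ring_nf
        linear_combination E1y - E1' - E2y + E2' + (c * a ^ 2 ^ k * (x1 - x2) - c * (a ^ 2 ^ s) ^ 2 ^ k * (x1 - x2)) * h2
      exact mul_left_cancel₀ hc0 hcc
    have hz0 : y1 - y2 = 0 := tail hcard hn hm hgcd rfl ha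
      (by rw [sub_pow_char_pow, hy1, hy2]) hrel
    have hyy : y1 = y2 := by linear_combination hz0
    exact add_right_cancel (show x1 + a = x2 + a from hyy)

lemma no_outside {n s m k : ℕ} (hcard : Fintype.card F = 2 ^ n) (hn : n = s * m)
    (hm : Odd m) (h3m : ¬ 3 ∣ m) (hgcd : Nat.gcd n k = 1)
    {a c b : F} (haS : a ^ 2 ^ s = a) (hc : c ^ 2 ^ s = c) (hc1 : c ≠ 1)
    (hbS : b ^ 2 ^ s = b) {x : F} (hx : ¬ x ^ 2 ^ s = x)
    (E : (x + a) ^ (2 ^ k + 1) + c * x ^ (2 ^ k + 1) = b) : False := by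
  have step : ∀ y : F, (y + a) ^ (2 ^ k + 1) + c * y ^ (2 ^ k + 1) = b →
      (y ^ 2 ^ s + a) ^ (2 ^ k + 1) + c * (y ^ 2 ^ s) ^ (2 ^ k + 1) = b := by
    intro y hy
    have h := congrArg (· ^ 2 ^ s) hy
    rw [add_pow_char_pow, mul_pow, pow_right_comm (y + a), pow_right_comm y,
      add_pow_char_pow, haS, hc, hbS] at h
    exact h
  set x1 := x ^ 2 ^ s with hx1
  set x2 := x1 ^ 2 ^ s with hx2
  set x3 := x2 ^ 2 ^ s with hx3
  have E1 := step x E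
  have E2 := step x1 E1
  have E3 := step x2 E2
  have d01 : x ≠ x1 := fun h => hx h.symm
  have d12 : x1 ≠ x2 := by
    intro h
    rw [hx2] at h
    have h' : x1 ^ 2 ^ s = x1 := h.symm
    rw [hx1] at h'
    exact hx (frobinj s h')
  have d23 : x2 ≠ x3 := by
    intro h
    rw [hx3] at h
    have h' : x2 ^ 2 ^ s = x2 := h.symm
    rw [hx2] at h'
    have h'' := frobinj s h'
    rw [hx1] at h''
    exact hx (frobinj s h'')
  have d02 : x ≠ x2 := by
    intro h
    rw [hx2, hx1] at h
    have h' : x ^ 2 ^ (s * 2) = x := by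
      rw [show s * 2 = s + s by ring, ← ppe]
      exact h.symm
    exact hx (fix_of_fix2 hcard hn hm h')
  have d13 : x1 ≠ x3 := by
    intro h
    rw [hx3, hx2] at h
    have h' : x1 ^ 2 ^ (s * 2) = x1 := by
      rw [show s * 2 = s + s by ring, ← ppe]
      exact h.symm
    have h'' := fix_of_fix2 hcard hn hm h'
    rw [hx1] at h''
    exact hx (frobinj s h'')
  have d03 : x ≠ x3 := by
    intro h
    rw [hx3, hx2, hx1] at h
    have h' : x ^ 2 ^ (s * 3) = x := by
      rw [show s * 3 = s + s + s by ring, ← ppe, ← ppe]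
      exact h.symm
    exact hx (fix_of_fix3 hcard hn hm h3m h')
  exact core hcard hgcd a c b hc1 E E1 E2 E3 d01 d02 d03 d12 d13 d23


lemma ncard_le_one_of {α : Type*} {s : Set α} (h : ∀ x ∈ s, ∀ y ∈ s, x = y) :
    s.ncard ≤ 1 := by
  rcases s.eq_empty_or_nonempty with rfl | ⟨x0, hx0⟩
  · simp
  · have hsub : s ⊆ {x0} := fun y hy => by
      simp [h y hy x0 hx0]
    calc s.ncard ≤ ({x0} : Set α).ncard := Set.ncard_le_ncard hsub (Set.finite_singleton x0)
    _ = 1 := Set.ncard_singleton x0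

lemma ncard_le_three_of {α : Type*} [Finite α] {s : Set α}
    (h : ∀ x0 ∈ s, ∀ x1 ∈ s, ∀ x2 ∈ s, ∀ x3 ∈ s,
      x0 ≠ x1 → x0 ≠ x2 → x0 ≠ x3 → x1 ≠ x2 → x1 ≠ x3 → x2 ≠ x3 → False) :
    s.ncard ≤ 3 := by
  by_contra hc
  push_neg at hc
  obtain ⟨t, hts, htc⟩ := Set.exists_subset_card_eq (show 4 ≤ s.ncard from hc)
  have htfin : t.Finite := Set.toFinite t
  obtain ⟨x0, hx0⟩ : t.Nonempty := by
    rw [← Set.ncard_pos htfin, htc]; norm_num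
  have hdiff : (t \ {x0}).ncard = 3 := by
    rw [Set.ncard_diff_singleton_of_mem hx0, htc]
  obtain ⟨x1, x2, x3, h12, h13, h23, heq⟩ := Set.ncard_eq_three.mp hdiff
  have m1 : x1 ∈ t \ {x0} := by rw [heq]; simp
  have m2 : x2 ∈ t \ {x0} := by rw [heq]; simp
  have m3 : x3 ∈ t \ {x0} := by rw [heq]; simp
  exact h x0 (hts hx0) x1 (hts m1.1) x2 (hts m2.1) x3 (hts m3.1)
    (fun he => m1.2 (by simp [← he])) (fun he => m2.2 (by simp [← he]))
    (fun he => m3.2 (by simp [← he])) h12 h13 h23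


end Stmt12

/-- `n = s·m` with `n` odd, Gold function `x^{2^k+1}` with `gcd(n,k) = 1`,
`α ∈ 𝔽_{2^s}*`; `G(x) = x^{2^k+1} + α` on `𝔽_{2^s}` and `G(x) = x^{2^k+1}` outside. Then for
every `c ∈ 𝔽_{2^s} \ {1}` the c-differential uniformity of `G` is ≤ 6, and ≤ 5 if `3 ∤ m`. -/
theorem stmt_12 (s m n k : ℕ) (hs : 0 < s) (hnodd : Odd n) (hn : n = s * m)
    (hk1 : 1 ≤ k) (hkn : k < n) (hgcd : Nat.gcd n k = 1)
    (α : GaloisField 2 n) (hα : α ^ 2 ^ s = α) (hα0 : α ≠ 0)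
    (G : GaloisField 2 n → GaloisField 2 n)
    (hG1 : ∀ x : GaloisField 2 n, x ^ 2 ^ s = x → G x = x ^ (2 ^ k + 1) + α)
    (hG2 : ∀ x : GaloisField 2 n, ¬ x ^ 2 ^ s = x → G x = x ^ (2 ^ k + 1))
    (c : GaloisField 2 n) (hc : c ^ 2 ^ s = c) (hc1 : c ≠ 1) :
    (∀ a b : GaloisField 2 n,
      Nat.card {x : GaloisField 2 n // G (x + a) - c * G x = b} ≤ 6) ∧
    (¬ 3 ∣ m → ∀ a b : GaloisField 2 n,
      Nat.card {x : GaloisField 2 n // G (x + a) - c * G x = b} ≤ 5) := by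
  classical
  haveI : Fintype (GaloisField 2 n) := Fintype.ofFinite _
  have hn0 : n ≠ 0 := by
    rcases hnodd with ⟨t, ht⟩; omega
  have hcard : Fintype.card (GaloisField 2 n) = 2 ^ n := by
    have h := GaloisField.card 2 n hn0
    rwa [Nat.card_eq_fintype_card] at h
  have hm_odd : Odd m := by
    rw [hn] at hnodd
    exact (Nat.odd_mul.mp hnodd).2
  have h2F : (2 : GaloisField 2 n) = 0 := CharTwo.two_eq_zero
  have frobs : ∀ u v : GaloisField 2 n, (u + v) ^ 2 ^ s = u ^ 2 ^ s + v ^ 2 ^ s := fun u v =>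
    add_pow_char_pow u v 2 s
  have key : ∀ a b : GaloisField 2 n,
      Nat.card {x : GaloisField 2 n // G (x + a) - c * G x = b} ≤ 6 ∧
      (¬ 3 ∣ m → Nat.card {x : GaloisField 2 n // G (x + a) - c * G x = b} ≤ 5) := by
    intro a b
    have hEcard : Nat.card {x : GaloisField 2 n // G (x + a) - c * G x = b}
        = Set.ncard {x : GaloisField 2 n | G (x + a) - c * G x = b} :=
      Nat.card_coe_set_eq {x : GaloisField 2 n | G (x + a) - c * G x = b}
    rw [hEcard]
    set E : Set (GaloisField 2 n) := {x : GaloisField 2 n | G (x + a) - c * G x = b} with hE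
    by_cases haS : a ^ 2 ^ s = a
    · -- a in subfield
      have hsub1 : ∀ x ∈ E, x ^ 2 ^ s = x →
          (x + a) ^ (2 ^ k + 1) + c * x ^ (2 ^ k + 1) = b + α + c * α := by
        intro x hx hxS
        have hxaS : (x + a) ^ 2 ^ s = x + a := by rw [frobs, hxS, haS]
        rw [Set.mem_setOf_eq, hG1 _ hxaS, hG1 _ hxS] at hx
        linear_combination hx + (c * x ^ (2 ^ k + 1) - α) * h2F
      have hsub2 : ∀ x ∈ E, ¬ x ^ 2 ^ s = x →
          (x + a) ^ (2 ^ k + 1) + c * x ^ (2 ^ k + 1) = b := by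
        intro x hx hxS
        have hxaS : ¬ (x + a) ^ 2 ^ s = x + a := by
          intro hcon; apply hxS
          rw [frobs, haS] at hcon
          exact add_right_cancel hcon
        rw [Set.mem_setOf_eq, hG2 _ hxaS, hG2 _ hxS] at hx
        linear_combination hx + (c * x ^ (2 ^ k + 1)) * h2F
      set T1 : Set (GaloisField 2 n) := {x : GaloisField 2 n | (x + a) ^ (2 ^ k + 1) + c * x ^ (2 ^ k + 1) = b + α + c * α}
        with hT1d
      set T2 : Set (GaloisField 2 n) := {x : GaloisField 2 n | (x + a) ^ (2 ^ k + 1) + c * x ^ (2 ^ k + 1) = b} with hT2d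
      have hT1 : T1.ncard ≤ 3 := Stmt12.ncard_le_three_of
        (fun x0 h0 x1 h1 x2 h2' x3 h3 d01 d02 d03 d12 d13 d23 =>
          Stmt12.core hcard hgcd a c _ hc1 h0 h1 h2' h3 d01 d02 d03 d12 d13 d23)
      have hT2 : T2.ncard ≤ 3 := Stmt12.ncard_le_three_of
        (fun x0 h0 x1 h1 x2 h2' x3 h3 d01 d02 d03 d12 d13 d23 =>
          Stmt12.core hcard hgcd a c _ hc1 h0 h1 h2' h3 d01 d02 d03 d12 d13 d23)
      have hEsub : E ⊆ T1 ∪ T2 := by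
        intro x hx
        by_cases hxS : x ^ 2 ^ s = x
        · exact Or.inl (hsub1 x hx hxS)
        · exact Or.inr (hsub2 x hx hxS)
      constructor
      · calc E.ncard ≤ (T1 ∪ T2).ncard := Set.ncard_le_ncard hEsub (Set.toFinite _)
          _ ≤ T1.ncard + T2.ncard := Set.ncard_union_le T1 T2
          _ ≤ 6 := by omega
      · intro h3m
        by_cases hbS : b ^ 2 ^ s = b
        · have hEsub' : E ⊆ T1 := by
            intro x hx
            by_cases hxS : x ^ 2 ^ s = x
            · exact hsub1 x hx hxS
            · exact absurd (hsub2 x hx hxS)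
                (fun hq => Stmt12.no_outside hcard hn hm_odd h3m hgcd haS hc hc1 hbS hxS hq)
          calc E.ncard ≤ T1.ncard := Set.ncard_le_ncard hEsub' (Set.toFinite _)
            _ ≤ 5 := by omega
        · have hEsub' : E ⊆ T2 := by
            intro x hx
            by_cases hxS : x ^ 2 ^ s = x
            · exfalso
              apply hbS
              have heq := hsub1 x hx hxS
              have hxaS : (x + a) ^ 2 ^ s = x + a := by rw [frobs, hxS, haS]
              have hbeq : b = (x + a) ^ (2 ^ k + 1) + c * x ^ (2 ^ k + 1) + α + c * α := by
                linear_combination heq + (b - (x + a) ^ (2 ^ k + 1) - c * x ^ (2 ^ k + 1)) * h2F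
              rw [hbeq, frobs, frobs, frobs, mul_pow, mul_pow, pow_right_comm (x + a),
                pow_right_comm x, hxaS, hxS, hα, hc]
            · exact hsub2 x hx hxS
          calc E.ncard ≤ T2.ncard := Set.ncard_le_ncard hEsub' (Set.toFinite _)
            _ ≤ 5 := by omega
    · -- a outside subfield
      set T1 : Set (GaloisField 2 n) := {x : GaloisField 2 n | x ^ 2 ^ s = x ∧
        (x + a) ^ (2 ^ k + 1) + c * x ^ (2 ^ k + 1) = b + c * α} with hT1d
      set T2 : Set (GaloisField 2 n) := {x : GaloisField 2 n | (x + a) ^ 2 ^ s = x + a ∧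
        (x + a) ^ (2 ^ k + 1) + c * x ^ (2 ^ k + 1) = b + α} with hT2d
      set T3 : Set (GaloisField 2 n) := {x : GaloisField 2 n | (x + a) ^ (2 ^ k + 1) + c * x ^ (2 ^ k + 1) = b} with hT3d
      have hEsub : E ⊆ (T1 ∪ T2) ∪ T3 := by
        intro x hx
        rw [Set.mem_setOf_eq] at hx
        by_cases hxS : x ^ 2 ^ s = x
        · have hxaS : ¬ (x + a) ^ 2 ^ s = x + a := by
            intro hcon
            apply haS
            have h' := sub_pow_char_pow (p := 2) (R := GaloisField 2 n) (x + a) x s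
            rw [hcon, hxS] at h'
            simpa using h'
          rw [hG1 _ hxS, hG2 _ hxaS] at hx
          refine Or.inl (Or.inl ⟨hxS, ?_⟩)
          linear_combination hx + (c * x ^ (2 ^ k + 1)) * h2F
        · by_cases hxaS : (x + a) ^ 2 ^ s = x + a
          · rw [hG1 _ hxaS, hG2 _ hxS] at hx
            refine Or.inl (Or.inr ⟨hxaS, ?_⟩)
            linear_combination hx + (c * x ^ (2 ^ k + 1) - α) * h2F
          · rw [hG2 _ hxaS, hG2 _ hxS] at hx
            refine Or.inr ?_
            show (x + a) ^ (2 ^ k + 1) + c * x ^ (2 ^ k + 1) = b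
            linear_combination hx + (c * x ^ (2 ^ k + 1)) * h2F
      have hT1 : T1.ncard ≤ 1 := Stmt12.ncard_le_one_of (fun x hx y hy =>
        Stmt12.sol_S_unique (m := m) hcard hn hm_odd hgcd haS hc hx.1 hy.1 hx.2 hy.2)
      have hT2 : T2.ncard ≤ 1 := Stmt12.ncard_le_one_of (fun x hx y hy =>
        Stmt12.sol_aS_unique (m := m) hcard hn hnodd hm_odd hgcd haS hc hx.1 hy.1 hx.2 hy.2)
      have hT3 : T3.ncard ≤ 3 := Stmt12.ncard_le_three_of
        (fun x0 h0 x1 h1 x2 h2' x3 h3 d01 d02 d03 d12 d13 d23 =>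
          Stmt12.core hcard hgcd a c _ hc1 h0 h1 h2' h3 d01 d02 d03 d12 d13 d23)
      have hb5 : E.ncard ≤ 5 := by
        calc E.ncard ≤ ((T1 ∪ T2) ∪ T3).ncard := Set.ncard_le_ncard hEsub (Set.toFinite _)
          _ ≤ (T1 ∪ T2).ncard + T3.ncard := Set.ncard_union_le _ _
          _ ≤ (T1.ncard + T2.ncard) + T3.ncard := by
              have := Set.ncard_union_le T1 T2; omega
          _ ≤ 5 := by omega
      exact ⟨by omega, fun _ => hb5⟩
  exact ⟨fun a b => (key a b).1, fun h3 a b => (key a b).2 h3⟩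
end

section
/- Let p be prime, s | n, let g be induced by a polynomial with coefficients in F_{p^s}, and let a ∈ F_{p^n} \ F_{p^s}, b ∈ F_{p^n}, c ∈ F_{p^n} nonzero. Assume f : F_{p^s} → F_{p^s}. Then the number of x ∈ F_{p^n} with x ∉ F_{p^s}, x + a ∈ F_{p^s}, and f(x+a) − c g(x) = b is at most δ_{g, c^{p^s−1}}, the c^{p^s−1}-differential uniformity of g. -/
/-- Remark `reduce`: `g` with coefficients in `𝔽_{p^s}` (it commutes with
`x ↦ x^{p^s}`), `f` mapping `𝔽_{p^s}` into itself, `a ∉ 𝔽_{p^s}`, `c ≠ 0`. The number of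
`x ∉ 𝔽_{p^s}` with `x + a ∈ 𝔽_{p^s}` and `f(x+a) - c·g(x) = b` is at most
`δ_{g, c^{p^s−1}}`. -/
theorem stmt_15 (p s n : ℕ) [Fact p.Prime] (hs : 0 < s) (hsn : s ∣ n)
    (c : GaloisField p n) (hc : c ≠ 0)
    (f g : GaloisField p n → GaloisField p n)
    (hf : ∀ x : GaloisField p n, x ^ p ^ s = x → (f x) ^ p ^ s = f x)
    (hg : ∀ x : GaloisField p n, g (x ^ p ^ s) = g x ^ p ^ s)
    (δ : ℕ)
    (hδ : ∀ a' b' : GaloisField p n, (c ^ (p ^ s - 1) = 1 → a' ≠ 0) →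
      Nat.card {x : GaloisField p n // g (x + a') - c ^ (p ^ s - 1) * g x = b'} ≤ δ)
    (a b : GaloisField p n) (ha : ¬ a ^ p ^ s = a) :
    Nat.card {x : GaloisField p n //
      ¬ x ^ p ^ s = x ∧ (x + a) ^ p ^ s = x + a ∧ f (x + a) - c * g x = b} ≤ δ := by
  set a' : GaloisField p n := a ^ p ^ s - a with ha'
  set b' : GaloisField p n := (b ^ p ^ s - b) * c⁻¹ with hb'
  have ha'0 : a' ≠ 0 := sub_ne_zero.mpr ha
  have hcp : c ^ (p ^ s - 1) * c = c ^ p ^ s := by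
    rw [← pow_succ, Nat.sub_add_cancel (Nat.one_le_pow _ _ (Fact.out : p.Prime).pos)]
  refine le_trans ?_ (hδ a' b' (fun _ => ha'0))
  apply Nat.card_le_card_of_injective
    (f := fun x => (⟨x.1 - a', ?_⟩ :
      {x : GaloisField p n // g (x + a') - c ^ (p ^ s - 1) * g x = b'}))
  · intro x y hxy
    have : x.1 - a' = y.1 - a' := congrArg Subtype.val hxy
    exact Subtype.ext (by linear_combination this)
  · obtain ⟨x, hx1, hx2, hx3⟩ := x
    -- x ^ p ^ s = x - a'
    have hxps : x ^ p ^ s = x - a' := by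
      have := hx2
      rw [add_pow_char_pow] at this
      rw [ha']
      linear_combination this
    -- raise hx3 to the p^s power
    have h4 : f (x + a) - c ^ p ^ s * g (x - a') = b ^ p ^ s := by
      have := congrArg (· ^ p ^ s) hx3
      rw [sub_pow_char_pow, mul_pow, hf _ hx2, ← hg, hxps] at this
      exact this
    -- combine with hx3
    have key : c ^ p ^ s * g (x - a') - c * g x = b - b ^ p ^ s := by
      linear_combination hx3 - h4
    show g (x - a' + a') - c ^ (p ^ s - 1) * g (x - a') = b'
    rw [sub_add_cancel, hb']
    field_simp
    linear_combination -key + (g (x - a') - c ^ (p^s - 1) * g (x - a')) * c - g (x - a') * hcp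
end
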